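/- For every ε > 0 there exists M₀ such that for every integer M ≥ M₀ and every real number D with 1 ≤ D ≤ M², there exist integers M' and k with 2⁻¹⁰·M ≤ M' ≤ M and (2 − ε)·log₂ M ≤ k ≤ (2 + ε)·log₂ M such that D ≤ C(M', k)·2^(−C(k,2)) ≤ 2D. -/

import Mathlib

/-!
Adding one to `m` multiplies `C(m, k)` by `(m + 1) / (m + 1 - k) ≤ 2` once `2k ≤ m + 1`, so
`m ↦ C(m, k) 2^(-C(k,2))` climbs in steps of ratio at most `2`, and a discrete intermediate value
argument finds `M'` as soon as the value is at most `1` at `m = ⌈M / 2^10⌉` and at least `2M²` at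
`m = M`. With `L = ⌊log₂ M⌋`, `t = ⌊log₂ L⌋` and `L = u + t + 4`, take `k = 2u`. The estimates
`(m + 1 - k)^k ≤ C(m, k) k^k ≤ (3m)^k` and `2^t ≤ k ≤ 2^(t+2)` turn both endpoint conditions into
inequalities between exponents of `2`, which hold once `u ≥ 2t + 11`. As `t = O(log L)`, this and
`(2 - ε) log₂ M ≤ 2u ≤ (2 + ε) log₂ M` hold for all large `M`.
-/

open Filter Real

theorem exists_le_le_two_mul_of_succ_le_two_mul {g : ℕ → ℝ} {a b : ℕ} {D : ℝ} (hD : 0 ≤ D)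
    (hab : a ≤ b) (ha : g a ≤ D) (hb : D ≤ g b)
    (hstep : ∀ m, a ≤ m → m < b → g (m + 1) ≤ 2 * g m) :
    ∃ m, a ≤ m ∧ m ≤ b ∧ D ≤ g m ∧ g m ≤ 2 * D := by
  classical
  have hex : ∃ m, a ≤ m ∧ D ≤ g m := ⟨b, hab, hb⟩
  set m := Nat.find hex
  obtain ⟨ham, hDm⟩ : a ≤ m ∧ D ≤ g m := Nat.find_spec hex
  have hmb : m ≤ b := Nat.find_min' hex ⟨hab, hb⟩
  refine ⟨m, ham, hmb, hDm, ?_⟩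
  rcases ham.eq_or_lt with hma | hma
  · rw [← hma]; linarith
  · obtain ⟨p, hp⟩ : ∃ p, m = p + 1 := Nat.exists_eq_add_one_of_ne_zero (by omega)
    have hgp : g p < D := by
      have := Nat.find_min hex (show p < m by omega)
      exact not_le.1 fun h => this ⟨by omega, h⟩
    calc g m = g (p + 1) := by rw [hp]
      _ ≤ 2 * g p := hstep p (by omega) (by omega)
      _ ≤ 2 * D := by linarith

theorem Nat.choose_succ_le_two_mul_choose {m k : ℕ} (h : 2 * k ≤ m + 1) :
    (m + 1).choose k ≤ 2 * m.choose k := by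
  refine Nat.le_of_mul_le_mul_right ?_ (by omega : 0 < m + 1 - k)
  calc (m + 1).choose k * (m + 1 - k) = m.choose k * (m + 1) := (choose_mul_succ_eq m k).symm
    _ ≤ m.choose k * (2 * (m + 1 - k)) := Nat.mul_le_mul_left _ (by omega)
    _ = 2 * m.choose k * (m + 1 - k) := by ring

theorem Nat.pow_self_le_three_pow_mul_factorial (k : ℕ) : k ^ k ≤ 3 ^ k * k.factorial := by
  have h : ((k : ℝ) ^ k / k.factorial) ≤ exp k :=
    Real.pow_div_factorial_le_exp _ (Nat.cast_nonneg k) k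
  have he : exp (k : ℝ) ≤ 3 ^ k := by
    rw [← exp_one_pow]
    exact pow_le_pow_left₀ (exp_pos 1).le (exp_one_lt_d9.trans (by norm_num)).le k
  rw [div_le_iff₀ (by positivity)] at h
  exact_mod_cast h.trans (mul_le_mul_of_nonneg_right he (by positivity))

theorem Nat.choose_mul_pow_self_le (n k : ℕ) : n.choose k * k ^ k ≤ (3 * n) ^ k := by
  calc n.choose k * k ^ k ≤ n.choose k * (3 ^ k * k.factorial) :=
        Nat.mul_le_mul_left _ (pow_self_le_three_pow_mul_factorial k)
    _ = 3 ^ k * n.descFactorial k := by rw [descFactorial_eq_factorial_mul_choose]; ring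
    _ ≤ 3 ^ k * n ^ k := Nat.mul_le_mul_left _ (descFactorial_le_pow n k)
    _ = (3 * n) ^ k := (mul_pow 3 n k).symm

theorem Nat.sub_pow_le_choose_mul_pow_self (n k : ℕ) : (n + 1 - k) ^ k ≤ n.choose k * k ^ k := by
  calc (n + 1 - k) ^ k ≤ n.descFactorial k := pow_sub_le_descFactorial n k
    _ = n.choose k * k.factorial := by rw [descFactorial_eq_factorial_mul_choose, mul_comm]
    _ ≤ n.choose k * k ^ k := Nat.mul_le_mul_left _ (factorial_le_pow k)

theorem Nat.choose_le_two_pow_choose_two {n k s t : ℕ} (hn : n ≤ 2 ^ s) (hk : 2 ^ t ≤ k)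
    (hexp : (s + 2) * k ≤ k.choose 2 + t * k) : n.choose k ≤ 2 ^ k.choose 2 := by
  refine Nat.le_of_mul_le_mul_right ?_ (by positivity : 0 < 2 ^ (t * k))
  calc n.choose k * 2 ^ (t * k) ≤ n.choose k * k ^ k := by
        rw [pow_mul]; exact Nat.mul_le_mul_left _ (Nat.pow_le_pow_left hk k)
    _ ≤ (3 * n) ^ k := choose_mul_pow_self_le n k
    _ ≤ (2 ^ (s + 2)) ^ k := Nat.pow_le_pow_left (by rw [pow_add]; omega) k
    _ ≤ 2 ^ k.choose 2 * 2 ^ (t * k) := by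
        rw [← pow_mul, ← pow_add]; exact Nat.pow_le_pow_right two_pos hexp

theorem Nat.two_pow_mul_two_pow_choose_two_le_choose {n k r s t : ℕ} (hn : 2 ^ s ≤ n + 1 - k)
    (hk : k ≤ 2 ^ t) (hexp : r + k.choose 2 + t * k ≤ s * k) :
    2 ^ r * 2 ^ k.choose 2 ≤ n.choose k := by
  refine Nat.le_of_mul_le_mul_right ?_ (by positivity : 0 < 2 ^ (t * k))
  calc 2 ^ r * 2 ^ k.choose 2 * 2 ^ (t * k) ≤ (2 ^ s) ^ k := by
        rw [← pow_add, ← pow_add, ← pow_mul]; exact Nat.pow_le_pow_right two_pos (by linarith)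
    _ ≤ (n + 1 - k) ^ k := Nat.pow_le_pow_left hn k
    _ ≤ n.choose k * k ^ k := sub_pow_le_choose_mul_pow_self n k
    _ ≤ n.choose k * 2 ^ (t * k) := by
        rw [pow_mul]; exact Nat.mul_le_mul_left _ (Nat.pow_le_pow_left hk k)

theorem Nat.two_mul_choose_two (u : ℕ) : (2 * u).choose 2 = u * (2 * u - 1) := by
  rw [choose_two_right, mul_assoc, Nat.mul_div_cancel_left _ two_pos]

theorem isLittleO_natLog_two_atTop :
    (fun n : ℕ => (Nat.log 2 n : ℝ)) =o[atTop] (fun n : ℕ => (n : ℝ)) := by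
  have hlog : (fun n : ℕ => log n) =o[atTop] (fun n : ℕ => (n : ℝ)) :=
    isLittleO_log_id_atTop.comp_tendsto tendsto_natCast_atTop_atTop
  refine Asymptotics.IsBigO.trans_isLittleO ?_ (hlog.const_mul_left (log 2)⁻¹)
  refine Asymptotics.IsBigO.of_bound 1 (Eventually.of_forall fun n => ?_)
  rw [one_mul, Real.norm_natCast]
  calc (Nat.log 2 n : ℝ) ≤ logb 2 n := by exact_mod_cast natLog_le_logb n 2
    _ = (log 2)⁻¹ * log n := by rw [logb, div_eq_inv_mul]
    _ ≤ ‖(log 2)⁻¹ * log n‖ := le_norm_self _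

theorem eventually_mul_natLog_add_le (a b : ℝ) {c : ℝ} (hc : 0 < c) :
    ∀ᶠ n : ℕ in atTop, a * Nat.log 2 n + b ≤ c * n := by
  have hconst : (fun _ : ℕ => b) =o[atTop] (fun n : ℕ => (n : ℝ)) :=
    (Asymptotics.isLittleO_const_id_atTop b).comp_tendsto tendsto_natCast_atTop_atTop
  filter_upwards [((isLittleO_natLog_two_atTop.const_mul_left a).add hconst).bound hc] with n hn
  simp only [Real.norm_eq_abs, Nat.abs_cast] at hn
  exact (le_abs_self _).trans hn

/-- The expected number of `k`-cliques in the random graph `G(m, 1/2)`. -/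
noncomputable def expectedCliqueCount (m k : ℕ) : ℝ := m.choose k * 2 ^ (-(k.choose 2 : ℤ))

theorem expectedCliqueCount_eq_div (m k : ℕ) :
    expectedCliqueCount m k = m.choose k / 2 ^ k.choose 2 := by
  rw [expectedCliqueCount, zpow_neg, zpow_natCast, div_eq_mul_inv]

theorem expectedCliqueCount_succ_le {m k : ℕ} (h : 2 * k ≤ m + 1) :
    expectedCliqueCount (m + 1) k ≤ 2 * expectedCliqueCount m k := by
  simp only [expectedCliqueCount_eq_div, ← mul_div_assoc]
  gcongr
  exact_mod_cast Nat.choose_succ_le_two_mul_choose h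

section
variable {M t u : ℕ}

theorem expectedCliqueCount_ceil_le_one (hM : M ≤ 2 ^ (u + t + 5)) (ht : 2 ^ t ≤ 2 * u)
    (hu : 5 ≤ u) : expectedCliqueCount ⌈(M : ℝ) / 2 ^ 10⌉₊ (2 * u) ≤ 1 := by
  obtain ⟨v, rfl⟩ : ∃ v, u = v + 5 := ⟨u - 5, by omega⟩
  have ha : ⌈(M : ℝ) / 2 ^ 10⌉₊ ≤ 2 ^ (v + t) := by
    rw [Nat.ceil_le, div_le_iff₀ (by positivity), Nat.cast_pow, Nat.cast_ofNat, ← pow_add]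
    exact_mod_cast (show v + 5 + t + 5 = v + t + 10 by omega) ▸ hM
  have hexp : (v + t + 2) * (2 * (v + 5)) ≤ (2 * (v + 5)).choose 2 + t * (2 * (v + 5)) := by
    rw [Nat.two_mul_choose_two, show 2 * (v + 5) - 1 = 2 * v + 9 by omega]
    nlinarith
  rw [expectedCliqueCount_eq_div, div_le_one (by positivity)]
  exact_mod_cast Nat.choose_le_two_pow_choose_two ha ht hexp

theorem two_mul_sq_le_expectedCliqueCount (hM : 2 ^ (u + t + 4) ≤ M) (hM' : M ≤ 2 ^ (u + t + 5))
    (ht : u ≤ 2 ^ (t + 1)) (hu : 2 * t + 11 ≤ u) :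
    2 * (M : ℝ) ^ 2 ≤ expectedCliqueCount M (2 * u) := by
  have hk : 2 * u ≤ 2 ^ (t + 2) := by rw [pow_succ]; omega
  have hn : 2 ^ (u + t + 3) ≤ M + 1 - 2 * u := by
    have : 2 ^ (t + 2) ≤ 2 ^ (u + t + 3) := Nat.pow_le_pow_right two_pos (by omega)
    rw [pow_succ] at hM
    omega
  have hexp :
      (2 * u + 2 * t + 11) + (2 * u).choose 2 + (t + 2) * (2 * u) ≤ (u + t + 3) * (2 * u) := by
    rw [Nat.two_mul_choose_two]
    obtain ⟨w, rfl⟩ : ∃ w, u = w + 1 := ⟨u - 1, by omega⟩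
    rw [show 2 * (w + 1) - 1 = 2 * w + 1 by omega]
    nlinarith
  have hsq : 2 * M ^ 2 ≤ 2 ^ (2 * u + 2 * t + 11) := by
    calc 2 * M ^ 2 ≤ 2 * (2 ^ (u + t + 5)) ^ 2 := by gcongr
      _ = 2 ^ (2 * u + 2 * t + 11) := by ring
  rw [expectedCliqueCount_eq_div, le_div_iff₀ (by positivity)]
  exact_mod_cast (Nat.mul_le_mul_right _ hsq).trans
    (Nat.two_pow_mul_two_pow_choose_two_le_choose hn hk hexp)

theorem exists_expectedCliqueCount_mem_Icc (hM : 2 ^ (u + t + 4) ≤ M) (hM' : M ≤ 2 ^ (u + t + 5))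
    (ht : 2 ^ t ≤ 2 * u) (ht' : u ≤ 2 ^ (t + 1)) (hu : 2 * t + 11 ≤ u) {D : ℝ} (hD₁ : 1 ≤ D)
    (hD₂ : D ≤ M ^ 2) :
    ∃ M' : ℕ, (M : ℝ) / 2 ^ 10 ≤ M' ∧ M' ≤ M ∧
      D ≤ expectedCliqueCount M' (2 * u) ∧ expectedCliqueCount M' (2 * u) ≤ 2 * D := by
  set a := ⌈(M : ℝ) / 2 ^ 10⌉₊
  have haM : a ≤ M := Nat.ceil_le.2 (div_le_self (Nat.cast_nonneg _) (by norm_num))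
  have hua : 4 * u ≤ a := by
    have h : 4 * u * 2 ^ 10 ≤ M := calc
      4 * u * 2 ^ 10 ≤ 2 ^ (t + 3) * 2 ^ 10 := by rw [pow_add 2 t 3]; omega
      _ ≤ 2 ^ (u + t + 4) := by rw [← pow_add]; exact Nat.pow_le_pow_right two_pos (by omega)
      _ ≤ M := hM
    have : ((4 * u : ℕ) : ℝ) ≤ a :=
      ((le_div_iff₀ (by positivity)).2 (by exact_mod_cast h)).trans (Nat.le_ceil _)
    exact_mod_cast this
  obtain ⟨m, ham, hmM, hDm, hmD⟩ := exists_le_le_two_mul_of_succ_le_two_mul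
    (g := fun m => expectedCliqueCount m (2 * u)) (by linarith) haM
    ((expectedCliqueCount_ceil_le_one hM' ht (by omega)).trans hD₁)
    (by nlinarith [two_mul_sq_le_expectedCliqueCount hM hM' ht' hu])
    (fun m hm _ => expectedCliqueCount_succ_le (by omega))
  exact ⟨m, (Nat.le_ceil ((M : ℝ) / 2 ^ 10)).trans (Nat.cast_le.2 ham), hmM, hDm, hmD⟩

end

theorem two_mul_mem_Icc_mul_logb {M t u : ℕ} {ε : ℝ} (hL : Nat.log 2 M = u + t + 4)
    (hε : 2 * t + 10 ≤ ε * Nat.log 2 M) :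
    ((2 * u : ℕ) : ℝ) ∈ Set.Icc ((2 - ε) * logb 2 M) ((2 + ε) * logb 2 M) := by
  have hlow : (Nat.log 2 M : ℝ) ≤ logb 2 M := natLog_le_logb M 2
  have hup : logb 2 M < Nat.log 2 M + 1 := by
    have h := Nat.lt_floor_add_one (logb 2 (M : ℝ))
    rwa [show ⌊logb 2 (M : ℝ)⌋₊ = Nat.log 2 M by exact_mod_cast natFloor_logb_natCast 2 M] at h
  rw [hL] at hlow hup hε
  push_cast at hlow hup hε ⊢
  have : 0 < ε := by nlinarith
  constructor <;> nlinarith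

theorem binomial_technical_lemma :
    ∀ ε > (0 : ℝ), ∃ M₀ : ℕ, ∀ M : ℕ, M₀ ≤ M → ∀ D : ℝ, 1 ≤ D → D ≤ (M : ℝ) ^ 2 →
      ∃ M' k : ℕ, (M : ℝ) / 2 ^ 10 ≤ (M' : ℝ) ∧ M' ≤ M ∧
        (2 - ε) * Real.logb 2 M ≤ (k : ℝ) ∧ (k : ℝ) ≤ (2 + ε) * Real.logb 2 M ∧
        D ≤ (M'.choose k : ℝ) * 2 ^ (-(k.choose 2 : ℤ)) ∧
        (M'.choose k : ℝ) * 2 ^ (-(k.choose 2 : ℤ)) ≤ 2 * D := by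
  intro ε hε
  obtain ⟨L₀, hL₀⟩ := eventually_atTop.1
    ((eventually_mul_natLog_add_le 3 15 one_pos).and (eventually_mul_natLog_add_le 2 10 hε))
  refine ⟨2 ^ L₀, fun M hM D hD₁ hD₂ => ?_⟩
  have hM₀ : M ≠ 0 := (Nat.two_pow_pos L₀).trans_le hM |>.ne'
  set L := Nat.log 2 M
  set t := Nat.log 2 L
  obtain ⟨hL, hεL⟩ := hL₀ L (Nat.le_log_of_pow_le one_lt_two hM)
  have hLlog : 3 * t + 15 ≤ L := by exact_mod_cast (one_mul (L : ℝ)) ▸ hL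
  obtain ⟨u, hLu⟩ : ∃ u, L = u + t + 4 := ⟨L - t - 4, by omega⟩
  have htL : 2 ^ t ≤ L := Nat.pow_log_le_self 2 (by omega)
  have hLt : L < 2 ^ (t + 1) := Nat.lt_pow_succ_log_self one_lt_two L
  have hML : 2 ^ L ≤ M := Nat.pow_log_le_self 2 hM₀
  have hML' : M < 2 ^ (L + 1) := Nat.lt_pow_succ_log_self one_lt_two M
  obtain ⟨M', hM'₁, hM'₂, hD, hD'⟩ := exists_expectedCliqueCount_mem_Icc (hLu ▸ hML)
    (by rw [show u + t + 5 = L + 1 by omega]; exact hML'.le) (by omega) (by omega) (by omega)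
    hD₁ hD₂
  obtain ⟨hk₁, hk₂⟩ := two_mul_mem_Icc_mul_logb hLu hεL
  exact ⟨M', 2 * u, hM'₁, hM'₂, hk₁, hk₂, hD, hD'⟩
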